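/- Assume 2β₁ ≤ d + α and that ∂D satisfies the Aikawa condition with exponent q' for some q' ∈ (β₁, d]. Then there exists C > 0 such that for all A > 0, all a > 0, all x, z ∈ D, all r > 0 and all 0 < u ≤ s: ∫_{B_D(z,s) ∖ B(x,r)} Φ(a/((max(δ_D(y), u)) ∧ A)) J(x,y) dy ≤ C s^d r^{−d−α} (1 + (a/(s ∧ A))^{β₁}) Φ((r ∧ A₀)²/((δ_D(x) ∧ A₀)(u ∧ A₀))). -/

import Mathlib

open MeasureTheory Metric Set ENNReal Filter

noncomputable def deltaD {d : ℕ} (D : Set (EuclideanSpace ℝ (Fin d)))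
    (x : EuclideanSpace ℝ (Fin d)) : ℝ :=
  Metric.infDist x (frontier D)

def Aikawa {d : ℕ} (D : Set (EuclideanSpace ℝ (Fin d))) (q : ℝ) : Prop :=
  ∃ C₀ : ℝ, 1 ≤ C₀ ∧ ∀ x ∈ frontier D, ∀ r s : ℝ, 0 < s → s ≤ r →
    ENNReal.ofReal r < EMetric.diam (frontier D) →
    MeasureTheory.volume {y : EuclideanSpace ℝ (Fin d) |
        y ∈ Metric.ball x r ∧ Metric.infDist y (frontier D) < s} ≤
      ENNReal.ofReal (C₀ * (s / r) ^ q) * MeasureTheory.volume (Metric.ball x r)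

noncomputable def truncMin (A : ℝ≥0∞) (r : ℝ) : ℝ := (min (ENNReal.ofReal r) A).toReal

set_option maxHeartbeats 1000000


lemma truncMin_nonneg (A : ℝ≥0∞) (r : ℝ) : 0 ≤ truncMin A r := ENNReal.toReal_nonneg

lemma truncMin_pos {A : ℝ≥0∞} (hA : 0 < A) {r : ℝ} (hr : 0 < r) : 0 < truncMin A r := by
  have h1 : min (ENNReal.ofReal r) A ≠ ⊤ :=
    ne_top_of_le_ne_top ENNReal.ofReal_ne_top (min_le_left _ _)
  have h2 : 0 < min (ENNReal.ofReal r) A := lt_min (ENNReal.ofReal_pos.2 hr) hA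
  exact ENNReal.toReal_pos h2.ne' h1

lemma truncMin_le {A : ℝ≥0∞} {r : ℝ} (hr : 0 ≤ r) : truncMin A r ≤ r := by
  have : min (ENNReal.ofReal r) A ≤ ENNReal.ofReal r := min_le_left _ _
  calc truncMin A r ≤ (ENNReal.ofReal r).toReal :=
        ENNReal.toReal_mono ENNReal.ofReal_ne_top this
    _ = r := ENNReal.toReal_ofReal hr

lemma truncMin_mono (A : ℝ≥0∞) {r t : ℝ} (h : r ≤ t) : truncMin A r ≤ truncMin A t := by
  refine ENNReal.toReal_mono (ne_top_of_le_ne_top ENNReal.ofReal_ne_top (min_le_left _ _)) ?_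
  exact min_le_min (ENNReal.ofReal_le_ofReal h) le_rfl

/-- key ratio bound : truncMin A t * r ≤ t * truncMin A r for 0 < r ≤ t -/
lemma truncMin_ratio {A : ℝ≥0∞} {r t : ℝ} (hr : 0 < r) (h : r ≤ t) :
    truncMin A t * r ≤ t * truncMin A r := by
  rcases le_or_gt (ENNReal.ofReal t) A with hcase | hcase
  · have h1 : truncMin A t = t := by
      rw [truncMin, min_eq_left hcase, ENNReal.toReal_ofReal (hr.le.trans h)]
    have h2 : truncMin A r = r := by
      rw [truncMin, min_eq_left ((ENNReal.ofReal_le_ofReal h).trans hcase),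
        ENNReal.toReal_ofReal hr.le]
    rw [h1, h2, mul_comm]
  · have hAt : A ≠ ⊤ := hcase.ne_top -- A < ofReal t < ⊤
    have h1 : truncMin A t = A.toReal := by rw [truncMin, min_eq_right hcase.le]
    have hAle : A.toReal ≤ t := by
      have := ENNReal.toReal_mono ENNReal.ofReal_ne_top hcase.le
      rwa [ENNReal.toReal_ofReal (hr.le.trans h)] at this
    rcases le_or_gt (ENNReal.ofReal r) A with hc2 | hc2
    · have h2 : truncMin A r = r := by
        rw [truncMin, min_eq_left hc2, ENNReal.toReal_ofReal hr.le]
      rw [h1, h2]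
      calc A.toReal * r ≤ t * r := mul_le_mul_of_nonneg_right hAle hr.le
        _ = r * t := mul_comm _ _
        _ = t * r := mul_comm _ _
    · have h2 : truncMin A r = A.toReal := by rw [truncMin, min_eq_right hc2.le]
      rw [h1, h2, mul_comm t]
      exact mul_le_mul_of_nonneg_left h ENNReal.toReal_nonneg


lemma phi_growth {Φ : ℝ → ℝ} {β₁ C_Φ : ℝ} (hβ₁ : 0 ≤ β₁) (hC_Φ : 1 ≤ C_Φ)
    (hΦ1 : ∀ r : ℝ, 0 ≤ r → 1 ≤ Φ r) (hΦmono : MonotoneOn Φ (Set.Ici 0))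
    (hΦscale : ∀ s r : ℝ, 0 < s → s ≤ r → Φ r ≤ C_Φ * (r / s) ^ β₁ * Φ s)
    {t : ℝ} (ht : 0 ≤ t) : Φ t ≤ C_Φ * Φ 1 * (1 + t ^ β₁) := by
  have hΦ1pos : (0:ℝ) < Φ 1 := lt_of_lt_of_le one_pos (hΦ1 1 one_pos.le)
  rcases le_or_gt t 1 with h | h
  · have h1 : Φ t ≤ Φ 1 := hΦmono ht (by norm_num) h
    have h2 : (1:ℝ) ≤ C_Φ * (1 + t ^ β₁) := by
      nlinarith [Real.rpow_nonneg ht β₁]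
    nlinarith
  · have h1 := hΦscale 1 t one_pos h.le
    rw [div_one] at h1
    have h2 : C_Φ * t ^ β₁ * Φ 1 ≤ C_Φ * Φ 1 * (1 + t ^ β₁) := by
      nlinarith [Real.rpow_nonneg (le_trans zero_le_one h.le) β₁]
    linarith

/-- the combinatorial factor bound (vi) -/
lemma factor_bound {β₁ u s δ X : ℝ} (hβ₁ : 0 ≤ β₁) (hu : 0 < u) (hus : u ≤ s)
    (hδ : 0 < δ) (hX : 0 ≤ X) :
    (max 1 (u / δ)) ^ β₁ * (1 + X * (max 1 (s / max δ u)) ^ β₁) ≤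
      (1 + X) * (1 + (s / δ) ^ β₁) := by
  have hs : 0 < s := lt_of_lt_of_le hu hus
  have hYnn : 0 ≤ (s / δ) ^ β₁ := Real.rpow_nonneg (by positivity) _
  rcases le_or_gt u δ with hcase | hcase
  · -- δ ≥ u : v = 1
    have hv : max 1 (u / δ) = 1 := max_eq_left ((div_le_one hδ).2 hcase)
    have hmax : max δ u = δ := max_eq_left hcase
    have hw : (max 1 (s / max δ u)) ^ β₁ ≤ 1 + (s / δ) ^ β₁ := by
      rw [hmax]
      rcases le_or_gt (s / δ) 1 with h2 | h2
      · rw [max_eq_left h2, Real.one_rpow]; linarith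
      · rw [max_eq_right h2.le]; linarith
    rw [hv, Real.one_rpow, one_mul]
    have : X * (max 1 (s / max δ u)) ^ β₁ ≤ X * (1 + (s / δ) ^ β₁) :=
      mul_le_mul_of_nonneg_left hw hX
    nlinarith
  · -- δ < u : v = u/δ
    have hv : max 1 (u / δ) = u / δ := max_eq_right (le_of_lt ((one_lt_div hδ).2 hcase))
    have hmax : max δ u = u := max_eq_right hcase.le
    have hw : max 1 (s / max δ u) = s / u := by
      rw [hmax]; exact max_eq_right ((one_le_div hu).2 hus)
    rw [hv, hw]
    have hmul : (u / δ) ^ β₁ * (s / u) ^ β₁ = (s / δ) ^ β₁ := by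
      rw [← Real.mul_rpow (by positivity) (by positivity)]
      rw [div_mul_div_comm]; congr 1; field_simp
    have hle : (u / δ) ^ β₁ ≤ (s / δ) ^ β₁ :=
      Real.rpow_le_rpow (by positivity) (by gcongr) hβ₁
    calc (u / δ) ^ β₁ * (1 + X * (s / u) ^ β₁)
        = (u / δ) ^ β₁ + X * ((u / δ) ^ β₁ * (s / u) ^ β₁) := by ring
      _ = (u / δ) ^ β₁ + X * (s / δ) ^ β₁ := by rw [hmul]
      _ ≤ (s / δ) ^ β₁ + X * (s / δ) ^ β₁ := by linarith
      _ ≤ (1 + X) * (1 + (s / δ) ^ β₁) := by nlinarith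


noncomputable def unitVol (d : ℕ) : ℝ :=
  (MeasureTheory.volume (Metric.ball (0 : EuclideanSpace ℝ (Fin d)) 1)).toReal

lemma unitVol_pos (d : ℕ) : 0 < unitVol d :=
  ENNReal.toReal_pos (measure_ball_pos _ _ one_pos).ne' measure_ball_lt_top.ne

lemma volball {d : ℕ} (x : EuclideanSpace ℝ (Fin d)) {r : ℝ} (hr : 0 < r) :
    volume (ball x r) = ENNReal.ofReal (r ^ (d : ℝ) * unitVol d) := by
  rw [Measure.addHaar_ball_of_pos _ x hr, finrank_euclideanSpace_fin,
    ENNReal.ofReal_mul (by positivity : (0:ℝ) ≤ r ^ (d : ℝ))]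
  congr 1
  · rw [Real.rpow_natCast]
  · exact (ENNReal.ofReal_toReal measure_ball_lt_top.ne).symm

lemma aik_algebra {C₀ c ρ t q' dd : ℝ} (hρ : 0 < ρ) (ht : 0 < t) :
    C₀ * (t / ρ) ^ q' * (ρ ^ dd * c) = C₀ * c * ρ ^ (dd - q') * t ^ q' := by
  have h1 : ρ ^ q' ≠ 0 := (Real.rpow_pos_of_pos hρ _).ne'
  rw [Real.div_rpow ht.le hρ.le, Real.rpow_sub hρ]
  field_simp


/-- single application of the Aikawa condition on a boundary ball -/
lemma aik_ball {d : ℕ} {D : Set (EuclideanSpace ℝ (Fin d))} {q' C₀ : ℝ}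
    (haik : ∀ x ∈ frontier D, ∀ r s : ℝ, 0 < s → s ≤ r →
      ENNReal.ofReal r < EMetric.diam (frontier D) →
      volume {y : EuclideanSpace ℝ (Fin d) |
          y ∈ ball x r ∧ Metric.infDist y (frontier D) < s} ≤
        ENNReal.ofReal (C₀ * (s / r) ^ q') * volume (ball x r))
    (hC₀ : 0 ≤ C₀) {ξ : EuclideanSpace ℝ (Fin d)} (hξ : ξ ∈ frontier D) {ρ t : ℝ}
    (ht : 0 < t) (htρ : t ≤ ρ) (hρd : ENNReal.ofReal ρ < EMetric.diam (frontier D)) :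
    volume {y : EuclideanSpace ℝ (Fin d) |
        y ∈ ball ξ ρ ∧ Metric.infDist y (frontier D) < t} ≤
      ENNReal.ofReal (C₀ * unitVol d * ρ ^ ((d : ℝ) - q') * t ^ q') := by
  have hρ0 : 0 < ρ := lt_of_lt_of_le ht htρ
  calc volume {y : EuclideanSpace ℝ (Fin d) |
        y ∈ ball ξ ρ ∧ Metric.infDist y (frontier D) < t}
      ≤ ENNReal.ofReal (C₀ * (t / ρ) ^ q') * volume (ball ξ ρ) :=
        haik ξ hξ ρ t ht htρ hρd
    _ = ENNReal.ofReal (C₀ * (t / ρ) ^ q') * ENNReal.ofReal (ρ ^ (d : ℝ) * unitVol d) := by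
        rw [volball _ hρ0]
    _ = ENNReal.ofReal (C₀ * (t / ρ) ^ q' * (ρ ^ (d : ℝ) * unitVol d)) := by
        rw [← ENNReal.ofReal_mul (by positivity)]
    _ = ENNReal.ofReal (C₀ * unitVol d * ρ ^ ((d : ℝ) - q') * t ^ q') := by
        rw [aik_algebra hρ0 ht]

theorem star {d : ℕ} (D : Set (EuclideanSpace ℝ (Fin d))) (hfr : (frontier D).Nonempty)
    {q' : ℝ} (hq'0 : 0 < q') (hq'd : q' ≤ (d : ℝ)) (hAik : Aikawa D q') :
    ∃ M : ℝ, 0 < M ∧ ∀ (z : EuclideanSpace ℝ (Fin d)) (s t : ℝ), 0 < t → t ≤ s →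
      volume (ball z s ∩ {y | Metric.infDist y (frontier D) < t}) ≤
        ENNReal.ofReal (M * (t ^ q' * s ^ ((d : ℝ) - q'))) := by
  classical
  obtain ⟨C₀, hC₀, haik⟩ := hAik
  set F := frontier D with hF
  set cd := unitVol d with hcd
  have hcd0 : 0 < cd := unitVol_pos d
  have hC₀0 : (0:ℝ) < C₀ := lt_of_lt_of_le one_pos hC₀
  -- the "case 1" constant
  set M₁ : ℝ := C₀ * cd * 4 ^ ((d : ℝ) - q') with hM₁
  have hM₁0 : 0 < M₁ := by positivity
  -- the generic goal as a function of a constant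
  have key1 : ∀ (z : EuclideanSpace ℝ (Fin d)) (s t : ℝ), 0 < t → t ≤ s →
      ENNReal.ofReal (4 * s) < EMetric.diam F →
      volume (ball z s ∩ {y | Metric.infDist y F < t}) ≤
        ENNReal.ofReal (M₁ * (t ^ q' * s ^ ((d : ℝ) - q'))) := by
    intro z s t ht hts h4s
    have hs : 0 < s := lt_of_lt_of_le ht hts
    rcases le_or_gt (2 * s) (Metric.infDist z F) with hfar | hnear
    · -- the set is empty
      have hempty : ball z s ∩ {y | Metric.infDist y F < t} = ∅ := by
        ext y
        simp only [mem_inter_iff, mem_ball, mem_setOf_eq, mem_empty_iff_false, iff_false,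
          not_and, not_lt]
        intro hy
        have h1 : Metric.infDist z F ≤ Metric.infDist y F + dist z y :=
          Metric.infDist_le_infDist_add_dist
        have h2 : dist z y < s := by rwa [dist_comm]
        linarith
      rw [hempty, measure_empty]
      exact zero_le
    · -- pick boundary point near z
      obtain ⟨ξ, hξF, hξ⟩ := (Metric.infDist_lt_iff hfr).1 (show Metric.infDist z F < 3*s by linarith)
      -- here hξ : dist z ξ < 3 * s  (we instantiate with 3*s)
      have hsub : ball z s ∩ {y | Metric.infDist y F < t} ⊆
          {y | y ∈ ball ξ (4 * s) ∧ Metric.infDist y F < t} := by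
        rintro y ⟨hy1, hy2⟩
        refine ⟨?_, hy2⟩
        rw [mem_ball] at hy1 ⊢
        calc dist y ξ ≤ dist y z + dist z ξ := dist_triangle _ _ _
          _ < s + 3 * s := add_lt_add hy1 hξ
          _ = 4 * s := by ring
      calc volume (ball z s ∩ {y | Metric.infDist y F < t})
          ≤ volume {y : EuclideanSpace ℝ (Fin d) |
              y ∈ ball ξ (4 * s) ∧ Metric.infDist y F < t} := measure_mono hsub
        _ ≤ ENNReal.ofReal (C₀ * cd * (4 * s) ^ ((d : ℝ) - q') * t ^ q') :=
            aik_ball haik hC₀0.le hξF ht (by linarith) h4s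
        _ ≤ ENNReal.ofReal (M₁ * (t ^ q' * s ^ ((d : ℝ) - q'))) := by
            apply ENNReal.ofReal_le_ofReal
            rw [Real.mul_rpow (by norm_num) hs.le, hM₁]
            ring_nf
            exact le_rfl
  by_cases htop : EMetric.diam F = ⊤
  · exact ⟨M₁, hM₁0, fun z s t ht hts =>
      key1 z s t ht hts (htop ▸ ENNReal.ofReal_lt_top)⟩
  · have hclosed : IsClosed F := isClosed_frontier
    have hbdd : Bornology.IsBounded F := Metric.isBounded_iff_ediam_ne_top.2 htop
    have hcomp : IsCompact F := Metric.isCompact_of_isClosed_isBounded hclosed hbdd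
    have hdq' : (0:ℝ) ≤ (d : ℝ) - q' := sub_nonneg.2 hq'd
    by_cases hss : F.Subsingleton
    · -- essentially a single boundary point
      obtain ⟨ξ₀, hξ₀⟩ := hfr
      refine ⟨cd, hcd0, fun z s t ht hts => ?_⟩
      have hs : 0 < s := lt_of_lt_of_le ht hts
      have hsub2 : ball z s ∩ {y | Metric.infDist y F < t} ⊆ ball ξ₀ t := by
        rintro y ⟨-, hy⟩
        obtain ⟨ξ, hξF, hdist⟩ := (Metric.infDist_lt_iff ⟨ξ₀, hξ₀⟩).1 hy
        rw [mem_ball]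
        rwa [hss hξF hξ₀] at hdist
      calc volume (ball z s ∩ {y | Metric.infDist y F < t})
          ≤ volume (ball ξ₀ t) := measure_mono hsub2
        _ = ENNReal.ofReal (t ^ (d:ℝ) * cd) := volball _ ht
        _ ≤ ENNReal.ofReal (cd * (t ^ q' * s ^ ((d : ℝ) - q'))) := by
            apply ENNReal.ofReal_le_ofReal
            have h1 : t ^ (d:ℝ) = t ^ q' * t ^ ((d:ℝ) - q') := by
              rw [← Real.rpow_add ht]; ring_nf
            have h2 : t ^ ((d:ℝ) - q') ≤ s ^ ((d:ℝ) - q') :=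
              Real.rpow_le_rpow ht.le hts hdq'
            have h3 : (0:ℝ) ≤ t ^ q' := Real.rpow_nonneg ht.le _
            rw [h1]
            calc t ^ q' * t ^ ((d:ℝ) - q') * cd ≤ t ^ q' * s ^ ((d:ℝ) - q') * cd :=
                mul_le_mul_of_nonneg_right (mul_le_mul_of_nonneg_left h2 h3) hcd0.le
              _ = cd * (t ^ q' * s ^ ((d:ℝ) - q')) := mul_comm _ _
    · -- frontier has positive diameter
      have hnontriv : F.Nontrivial := Set.not_subsingleton_iff.1 hss
      set R := (EMetric.diam F).toReal with hRdef
      have hR0 : 0 < R :=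
        ENNReal.toReal_pos (EMetric.diam_pos_iff.2 hnontriv).ne' htop
      have hediam : EMetric.diam F = ENNReal.ofReal R := (ENNReal.ofReal_toReal htop).symm
      -- finite covering of the compact frontier at scale R/8
      have hcover : F ⊆ ⋃ ξ ∈ F, ball ξ (R/8) := fun y hy =>
        Set.mem_biUnion hy (mem_ball_self (by positivity))
      obtain ⟨I, hIF, hIfin, hIcov⟩ :=
        hcomp.elim_finite_subcover_image (fun ξ _ => isOpen_ball) hcover
      set N : ℝ := (hIfin.toFinset.card : ℝ) with hNdef
      have hN0 : 0 ≤ N := Nat.cast_nonneg _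
      obtain ⟨ξ₀, hξ₀⟩ := hfr
      set M₂ : ℝ := (N + 1) * (C₀ * cd) with hM₂
      set M₃ : ℝ := 9 ^ (d:ℝ) * cd with hM₃
      have hM₂0 : 0 < M₂ := mul_pos (by linarith) (mul_pos hC₀0 hcd0)
      have hM₃0 : 0 < M₃ := by positivity
      refine ⟨max M₁ (max M₂ M₃), lt_max_of_lt_left hM₁0, fun z s t ht hts => ?_⟩
      have hs : 0 < s := lt_of_lt_of_le ht hts
      have hfinal : ∀ M' : ℝ, M' ≤ max M₁ (max M₂ M₃) →
          ∀ μ' : ℝ≥0∞, μ' ≤ ENNReal.ofReal (M' * (t ^ q' * s ^ ((d : ℝ) - q'))) →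
          μ' ≤ ENNReal.ofReal (max M₁ (max M₂ M₃) * (t ^ q' * s ^ ((d : ℝ) - q'))) := by
        intro M' hM' μ' hμ'
        refine hμ'.trans (ENNReal.ofReal_le_ofReal ?_)
        apply mul_le_mul_of_nonneg_right hM'
        positivity
      by_cases h4s : ENNReal.ofReal (4*s) < EMetric.diam F
      · exact hfinal M₁ (le_max_left _ _) _ (key1 z s t ht hts h4s)
      · push_neg at h4s
        have hR4s : R ≤ 4 * s := by
          have := ENNReal.toReal_mono ENNReal.ofReal_ne_top h4s
          rwa [ENNReal.toReal_ofReal (by linarith)] at this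
        rcases le_or_gt t (R/8) with htR | htR
        · -- small t : use the covering and Aikawa on each piece
          apply hfinal M₂ (le_trans (le_max_left _ _) (le_max_right _ _))
          have hsub3 : ball z s ∩ {y | Metric.infDist y F < t} ⊆
              ⋃ ξ ∈ hIfin.toFinset, {y : EuclideanSpace ℝ (Fin d) |
                y ∈ ball ξ (R/4) ∧ Metric.infDist y F < t} := by
            rintro y ⟨-, hy⟩
            obtain ⟨ξ', hξ'F, hd1⟩ := (Metric.infDist_lt_iff ⟨ξ₀, hξ₀⟩).1 hy
            obtain ⟨ξ, hξI, hd2⟩ := Set.mem_iUnion₂.1 (hIcov hξ'F)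
            refine Set.mem_biUnion (hIfin.mem_toFinset.2 hξI) ⟨?_, hy⟩
            rw [mem_ball]
            rw [mem_ball] at hd2
            calc dist y ξ ≤ dist y ξ' + dist ξ' ξ := dist_triangle _ _ _
              _ < t + R/8 := add_lt_add hd1 hd2
              _ ≤ R/8 + R/8 := by linarith
              _ = R/4 := by ring
          have haikball : ∀ ξ ∈ hIfin.toFinset,
              volume {y : EuclideanSpace ℝ (Fin d) |
                  y ∈ ball ξ (R/4) ∧ Metric.infDist y F < t} ≤
                ENNReal.ofReal (C₀ * cd * (R/4) ^ ((d : ℝ) - q') * t ^ q') := by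
            intro ξ hξI
            have hξF : ξ ∈ F := hIF (hIfin.mem_toFinset.1 hξI)
            refine aik_ball haik hC₀0.le hξF ht (by linarith) ?_
            rw [hediam]
            exact ENNReal.ofReal_lt_ofReal_iff hR0 |>.2 (by linarith)
          calc volume (ball z s ∩ {y | Metric.infDist y F < t})
              ≤ ∑ ξ ∈ hIfin.toFinset, volume {y : EuclideanSpace ℝ (Fin d) |
                  y ∈ ball ξ (R/4) ∧ Metric.infDist y F < t} :=
                (measure_mono hsub3).trans (measure_biUnion_finset_le _ _)
            _ ≤ ∑ _ξ ∈ hIfin.toFinset,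
                  ENNReal.ofReal (C₀ * cd * (R/4) ^ ((d : ℝ) - q') * t ^ q') :=
                Finset.sum_le_sum haikball
            _ = (hIfin.toFinset.card : ℝ≥0∞) *
                  ENNReal.ofReal (C₀ * cd * (R/4) ^ ((d : ℝ) - q') * t ^ q') := by
                rw [Finset.sum_const, nsmul_eq_mul]
            _ = ENNReal.ofReal (N * (C₀ * cd * (R/4) ^ ((d : ℝ) - q') * t ^ q')) := by
                rw [← ENNReal.ofReal_natCast (hIfin.toFinset.card),
                  ← ENNReal.ofReal_mul (Nat.cast_nonneg _)]
            _ ≤ ENNReal.ofReal (M₂ * (t ^ q' * s ^ ((d : ℝ) - q'))) := by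
                apply ENNReal.ofReal_le_ofReal
                have h2 : (R/4) ^ ((d:ℝ) - q') ≤ s ^ ((d:ℝ) - q') :=
                  Real.rpow_le_rpow (by positivity) (by linarith) hdq'
                have h3 : (0:ℝ) ≤ t ^ q' := Real.rpow_nonneg ht.le _
                have h4 : (0:ℝ) ≤ (R/4) ^ ((d:ℝ) - q') := Real.rpow_nonneg (by positivity) _
                rw [hM₂]
                have hA : (R/4) ^ ((d:ℝ) - q') * t ^ q' ≤ s ^ ((d:ℝ) - q') * t ^ q' :=
                  mul_le_mul_of_nonneg_right h2 h3
                have hB : N * (C₀ * cd) ≤ (N + 1) * (C₀ * cd) :=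
                  mul_le_mul_of_nonneg_right (by linarith) (by positivity)
                calc N * (C₀ * cd * (R/4) ^ ((d:ℝ) - q') * t ^ q')
                    = (N * (C₀ * cd)) * ((R/4) ^ ((d:ℝ) - q') * t ^ q') := by ring
                  _ ≤ ((N + 1) * (C₀ * cd)) * (s ^ ((d:ℝ) - q') * t ^ q') :=
                      mul_le_mul hB hA (by positivity)
                        (mul_nonneg (by linarith) (by positivity))
                  _ = (N + 1) * (C₀ * cd) * (t ^ q' * s ^ ((d:ℝ) - q')) := by ring
        · -- large t : crude inclusion in a ball of radius 9t
          apply hfinal M₃ (le_trans (le_max_right _ _) (le_max_right _ _))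
          have hsub4 : ball z s ∩ {y | Metric.infDist y F < t} ⊆ ball ξ₀ (9 * t) := by
            rintro y ⟨-, hy⟩
            obtain ⟨ξ', hξ'F, hd1⟩ := (Metric.infDist_lt_iff ⟨ξ₀, hξ₀⟩).1 hy
            have hd2 : dist ξ' ξ₀ ≤ R := Metric.dist_le_diam_of_mem' htop hξ'F hξ₀
            rw [mem_ball]
            calc dist y ξ₀ ≤ dist y ξ' + dist ξ' ξ₀ := dist_triangle _ _ _
              _ < t + R := add_lt_add_of_lt_of_le hd1 hd2
              _ ≤ t + 8 * t := by linarith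
              _ = 9 * t := by ring
          calc volume (ball z s ∩ {y | Metric.infDist y F < t})
              ≤ volume (ball ξ₀ (9 * t)) := measure_mono hsub4
            _ = ENNReal.ofReal ((9*t) ^ (d:ℝ) * cd) := volball _ (by linarith)
            _ ≤ ENNReal.ofReal (M₃ * (t ^ q' * s ^ ((d : ℝ) - q'))) := by
                apply ENNReal.ofReal_le_ofReal
                rw [Real.mul_rpow (by norm_num) ht.le, hM₃]
                have h1 : t ^ (d:ℝ) = t ^ q' * t ^ ((d:ℝ) - q') := by
                  rw [← Real.rpow_add ht]; ring_nf
                have h2 : t ^ ((d:ℝ) - q') ≤ s ^ ((d:ℝ) - q') :=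
                  Real.rpow_le_rpow ht.le hts hdq'
                have h3 : (0:ℝ) ≤ t ^ q' := Real.rpow_nonneg ht.le _
                have h9 : (0:ℝ) ≤ 9 ^ (d:ℝ) := Real.rpow_nonneg (by norm_num) _
                rw [h1]
                calc 9 ^ (d:ℝ) * (t ^ q' * t ^ ((d:ℝ) - q')) * cd
                    = (9 ^ (d:ℝ) * cd) * (t ^ q' * t ^ ((d:ℝ) - q')) := by ring
                  _ ≤ (9 ^ (d:ℝ) * cd) * (t ^ q' * s ^ ((d:ℝ) - q')) :=
                      mul_le_mul_of_nonneg_left (mul_le_mul_of_nonneg_left h2 h3)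
                        (mul_nonneg h9 hcd0.le)


theorem layers {d : ℕ} (D : Set (EuclideanSpace ℝ (Fin d))) {β₁ q' M : ℝ}
    (hβ₁ : 0 ≤ β₁) (hβq' : β₁ < q') (hM : 0 < M)
    (hstar : ∀ (z : EuclideanSpace ℝ (Fin d)) (s t : ℝ), 0 < t → t ≤ s →
      volume (ball z s ∩ {y | Metric.infDist y (frontier D) < t}) ≤
        ENNReal.ofReal (M * (t ^ q' * s ^ ((d : ℝ) - q')))) :
    ∃ C₂ : ℝ, 0 < C₂ ∧ ∀ (z : EuclideanSpace ℝ (Fin d)) (s : ℝ), 0 < s →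
      ∫⁻ y in ball z s ∩ {y | 0 < Metric.infDist y (frontier D)},
          ENNReal.ofReal (1 + (s / Metric.infDist y (frontier D)) ^ β₁) ≤
        ENNReal.ofReal (C₂ * s ^ (d : ℝ)) := by
  classical
  set F := frontier D with hF
  set cd := unitVol d with hcd
  have hcd0 : 0 < cd := unitVol_pos d
  set θ : ℝ := 2 ^ β₁ with hθ
  set ρ : ℝ := 2 ^ (-q') with hρ
  have hθ1 : 1 ≤ θ := Real.one_le_rpow one_le_two hβ₁
  have hθ0 : 0 < θ := lt_of_lt_of_le one_pos hθ1
  have hρ0 : 0 < ρ := Real.rpow_pos_of_pos two_pos _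
  have hθρ : θ * ρ = 2 ^ (β₁ - q') := by
    rw [hθ, hρ, ← Real.rpow_add two_pos]; ring_nf
  have hθρ1 : θ * ρ < 1 := by
    rw [hθρ]
    exact Real.rpow_lt_one_of_one_lt_of_neg one_lt_two (by linarith)
  have hθρ0 : 0 < θ * ρ := mul_pos hθ0 hρ0
  have hpowswap : ∀ (b : ℝ) (c : ℝ) (n : ℕ), 0 < b → (b ^ n) ^ c = (b ^ c) ^ n := by
    intro b c n hb
    rw [← Real.rpow_natCast b n, ← Real.rpow_mul hb.le, mul_comm,
      Real.rpow_mul hb.le, Real.rpow_natCast]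
  set K₀ : ℝ := (1 + θ) * cd + 2 * θ * M with hK₀
  have hK₀0 : 0 < K₀ := by positivity
  set w : ℝ≥0∞ := ENNReal.ofReal (θ * ρ) with hw
  have hw1 : w < 1 := by
    rw [hw, ← ENNReal.ofReal_one]
    exact ENNReal.ofReal_lt_ofReal_iff_of_nonneg hθρ0.le |>.2 hθρ1
  refine ⟨K₀ * (1 - θ * ρ)⁻¹, mul_pos hK₀0 (inv_pos.2 (by linarith)), fun z s hs => ?_⟩
  -- the dyadic layers
  set δ : EuclideanSpace ℝ (Fin d) → ℝ := fun y => Metric.infDist y F with hδ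
  set T : ℕ → Set (EuclideanSpace ℝ (Fin d)) := fun k =>
    Nat.rec (ball z s ∩ {y | s / 2 ≤ δ y})
      (fun k _ => ball z s ∩ {y | s / 2 ^ (k + 2) ≤ δ y ∧ δ y < s / 2 ^ (k + 1)}) k with hT
  have hT0 : T 0 = ball z s ∩ {y | s / 2 ≤ δ y} := rfl
  have hTsucc : ∀ k, T (k + 1) =
      ball z s ∩ {y | s / 2 ^ (k + 2) ≤ δ y ∧ δ y < s / 2 ^ (k + 1)} := fun k => rfl
  -- coverage
  have hcov : ball z s ∩ {y | 0 < δ y} ⊆ ⋃ k, T k := by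
    rintro y ⟨hy1, hy2⟩
    simp only [mem_setOf_eq] at hy2
    rcases le_or_gt (s / 2) (δ y) with hbig | hsmall
    · exact mem_iUnion.2 ⟨0, hy1, hbig⟩
    · have hex : ∃ n : ℕ, s / 2 ^ (n + 2) ≤ δ y := by
        obtain ⟨n, hn⟩ := pow_unbounded_of_one_lt (s / δ y) (one_lt_two (α := ℝ))
        refine ⟨n, ?_⟩
        have h2 : (2:ℝ) ^ n ≤ 2 ^ (n + 2) := pow_le_pow_right₀ one_le_two (by omega)
        have h3 : s < δ y * 2 ^ n := by
          rw [div_lt_iff₀ hy2] at hn; linarith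
        rw [div_le_iff₀ (by positivity)]
        nlinarith [hy2.le]
      have hspec : s / 2 ^ (Nat.find hex + 2) ≤ δ y := Nat.find_spec hex
      rcases Nat.eq_zero_or_pos (Nat.find hex) with h0 | hpos
      · rw [h0] at hspec
        exact mem_iUnion.2 ⟨1, hy1, by simpa using hspec, by simpa using hsmall⟩
      · obtain ⟨m, hm⟩ := Nat.exists_eq_succ_of_ne_zero hpos.ne'
        have hmin : ¬ s / 2 ^ (m + 2) ≤ δ y := Nat.find_min hex (hm ▸ Nat.lt_succ_self m)
        push_neg at hmin
        rw [hm] at hspec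
        exact mem_iUnion.2 ⟨m + 2, hy1, hspec, hmin⟩
  -- bound on each layer
  have hterm : ∀ k : ℕ,
      (∫⁻ y in T k, ENNReal.ofReal (1 + (s / δ y) ^ β₁)) ≤
        ENNReal.ofReal (K₀ * s ^ (d : ℝ)) * w ^ k := by
    intro k
    match k with
    | 0 =>
      have hptwise : ∀ y ∈ T 0, ENNReal.ofReal (1 + (s / δ y) ^ β₁) ≤
          ENNReal.ofReal (1 + θ) := by
        rintro y ⟨-, hy⟩
        simp only [mem_setOf_eq] at hy
        have hδy : 0 < δ y := lt_of_lt_of_le (by positivity) hy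
        apply ENNReal.ofReal_le_ofReal
        have h1 : s / δ y ≤ 2 := by rw [div_le_iff₀ hδy]; linarith
        have h2 : (s / δ y) ^ β₁ ≤ 2 ^ β₁ :=
          Real.rpow_le_rpow (by positivity) h1 hβ₁
        linarith
      calc (∫⁻ y in T 0, ENNReal.ofReal (1 + (s / δ y) ^ β₁))
          ≤ ∫⁻ _y in T 0, ENNReal.ofReal (1 + θ) :=
            setLIntegral_mono measurable_const hptwise
        _ = ENNReal.ofReal (1 + θ) * volume (T 0) := setLIntegral_const _ _
        _ ≤ ENNReal.ofReal (1 + θ) * volume (ball z s) :=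
            mul_le_mul_right (measure_mono (inter_subset_left)) _
        _ = ENNReal.ofReal (1 + θ) * ENNReal.ofReal (s ^ (d:ℝ) * cd) := by
            rw [volball _ hs]
        _ = ENNReal.ofReal ((1 + θ) * (s ^ (d:ℝ) * cd)) := by
            rw [← ENNReal.ofReal_mul (by positivity)]
        _ ≤ ENNReal.ofReal (K₀ * s ^ (d : ℝ)) * w ^ 0 := by
            rw [pow_zero, mul_one]
            apply ENNReal.ofReal_le_ofReal
            have h3 : (0:ℝ) ≤ s ^ (d:ℝ) := Real.rpow_nonneg hs.le _
            have h5 : (0:ℝ) ≤ 2 * θ * M * s ^ (d:ℝ) := by positivity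
            have h6 : ((1 + θ) * cd + 2 * θ * M) * s ^ (d:ℝ) =
                (1 + θ) * (s ^ (d:ℝ) * cd) + 2 * θ * M * s ^ (d:ℝ) := by ring
            rw [hK₀, h6]; linarith
    | k + 1 =>
      have h2k1 : (0:ℝ) < 2 ^ (k+1) := by positivity
      have h2k2 : (0:ℝ) < 2 ^ (k+2) := by positivity
      have hptwise : ∀ y ∈ T (k+1), ENNReal.ofReal (1 + (s / δ y) ^ β₁) ≤
          ENNReal.ofReal (2 * θ ^ (k + 2)) := by
        rintro y ⟨-, hy1, hy2⟩
        have hδy : 0 < δ y := lt_of_lt_of_le (by positivity) hy1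
        apply ENNReal.ofReal_le_ofReal
        have h1 : s / δ y ≤ 2 ^ (k+2) := by
          rw [div_le_iff₀ hδy]
          rw [div_le_iff₀ h2k2] at hy1
          linarith
        have h2 : (s / δ y) ^ β₁ ≤ ((2:ℝ) ^ (k+2)) ^ β₁ :=
          Real.rpow_le_rpow (by positivity) h1 hβ₁
        rw [hpowswap 2 β₁ (k+2) two_pos] at h2
        have h3 : (1:ℝ) ≤ θ ^ (k+2) := one_le_pow₀ hθ1
        linarith
      have hvol : volume (T (k+1)) ≤
          ENNReal.ofReal (M * ((s / 2 ^ (k+1)) ^ q' * s ^ ((d : ℝ) - q'))) := by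
        refine le_trans (measure_mono ?_) (hstar z s (s / 2 ^ (k+1)) (by positivity)
          (by rw [div_le_iff₀ h2k1]; nlinarith [one_le_pow₀ (one_le_two (α := ℝ)) (n := k+1)]))
        rintro y ⟨hy0, hy1, hy2⟩
        exact ⟨hy0, hy2⟩
      calc (∫⁻ y in T (k+1), ENNReal.ofReal (1 + (s / δ y) ^ β₁))
          ≤ ∫⁻ _y in T (k+1), ENNReal.ofReal (2 * θ ^ (k + 2)) :=
            setLIntegral_mono measurable_const hptwise
        _ = ENNReal.ofReal (2 * θ ^ (k + 2)) * volume (T (k+1)) := setLIntegral_const _ _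
        _ ≤ ENNReal.ofReal (2 * θ ^ (k + 2)) *
              ENNReal.ofReal (M * ((s / 2 ^ (k+1)) ^ q' * s ^ ((d : ℝ) - q'))) :=
            mul_le_mul_right hvol _
        _ = ENNReal.ofReal (2 * θ ^ (k + 2) *
              (M * ((s / 2 ^ (k+1)) ^ q' * s ^ ((d : ℝ) - q')))) := by
            rw [← ENNReal.ofReal_mul (by positivity)]
        _ ≤ ENNReal.ofReal (K₀ * s ^ (d : ℝ) * (θ * ρ) ^ (k+1)) := by
            apply ENNReal.ofReal_le_ofReal
            have key : (s / 2 ^ (k+1)) ^ q' = s ^ q' * ρ ^ (k+1) := by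
              rw [Real.div_rpow hs.le (by positivity), hpowswap 2 q' (k+1) two_pos, hρ,
                Real.rpow_neg two_pos.le, inv_pow]
              rw [div_eq_mul_inv]
            have hsd : s ^ q' * s ^ ((d:ℝ) - q') = s ^ (d:ℝ) := by
              rw [← Real.rpow_add hs]; ring_nf
            have hθk : (1:ℝ) ≤ θ ^ (k+2) := one_le_pow₀ hθ1
            have hρk : (0:ℝ) < ρ ^ (k+1) := pow_pos hρ0 _
            have hsd0 : (0:ℝ) < s ^ (d:ℝ) := Real.rpow_pos_of_pos hs _
            calc 2 * θ ^ (k + 2) * (M * ((s / 2 ^ (k+1)) ^ q' * s ^ ((d : ℝ) - q')))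
                = 2 * θ ^ (k + 2) * M * (s ^ q' * s ^ ((d:ℝ) - q')) * ρ ^ (k+1) := by
                  rw [key]; ring
              _ = 2 * θ * M * s ^ (d:ℝ) * (θ ^ (k+1) * ρ ^ (k+1)) := by
                  rw [hsd]; ring
              _ = 2 * θ * M * s ^ (d:ℝ) * (θ * ρ) ^ (k+1) := by rw [mul_pow]
              _ ≤ K₀ * s ^ (d:ℝ) * (θ * ρ) ^ (k+1) := by
                  have hp : (0:ℝ) ≤ (θ * ρ) ^ (k+1) := (pow_pos hθρ0 _).le
                  have h4 : 2 * θ * M ≤ K₀ := by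
                    rw [hK₀]; nlinarith [mul_pos (lt_of_lt_of_le one_pos hθ1 : (0:ℝ) < θ) hcd0]
                  exact mul_le_mul_of_nonneg_right
                    (mul_le_mul_of_nonneg_right h4 hsd0.le) hp
        _ = ENNReal.ofReal (K₀ * s ^ (d : ℝ)) * w ^ (k+1) := by
            rw [hw, ← ENNReal.ofReal_pow hθρ0.le, ← ENNReal.ofReal_mul (by positivity)]
  calc (∫⁻ y in ball z s ∩ {y | 0 < Metric.infDist y F},
        ENNReal.ofReal (1 + (s / Metric.infDist y F) ^ β₁))
      ≤ ∫⁻ y in ⋃ k, T k, ENNReal.ofReal (1 + (s / δ y) ^ β₁) :=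
        lintegral_mono_set hcov
    _ ≤ ∑' k, ∫⁻ y in T k, ENNReal.ofReal (1 + (s / δ y) ^ β₁) :=
        lintegral_iUnion_le _ _
    _ ≤ ∑' k, ENNReal.ofReal (K₀ * s ^ (d : ℝ)) * w ^ k := ENNReal.tsum_le_tsum hterm
    _ = ENNReal.ofReal (K₀ * s ^ (d : ℝ)) * ∑' k, w ^ k := ENNReal.tsum_mul_left
    _ = ENNReal.ofReal (K₀ * s ^ (d : ℝ)) * (1 - w)⁻¹ := by rw [ENNReal.tsum_geometric]
    _ = ENNReal.ofReal (K₀ * (1 - θ * ρ)⁻¹ * s ^ (d : ℝ)) := by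
        rw [hw, ← ENNReal.ofReal_one, ← ENNReal.ofReal_sub _ hθρ0.le,
          ← ENNReal.ofReal_inv_of_pos (by linarith), ← ENNReal.ofReal_mul (by positivity)]
        ring_nf


theorem pointwise {d : ℕ} {D : Set (EuclideanSpace ℝ (Fin d))}
    {Φ : ℝ → ℝ} {β₁ C_Φ : ℝ} (hβ₁ : 0 ≤ β₁) (hC_Φ : 1 ≤ C_Φ)
    (hΦ1 : ∀ r : ℝ, 0 ≤ r → 1 ≤ Φ r) (hΦmono : MonotoneOn Φ (Set.Ici 0))
    (hΦscale : ∀ s r : ℝ, 0 < s → s ≤ r → Φ r ≤ C_Φ * (r / s) ^ β₁ * Φ s)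
    {α : ℝ} (hα0 : 0 < α) {A₀ : ℝ≥0∞} (hA₀ : 0 < A₀) {C₁ : ℝ} (hC₁0 : 0 < C₁)
    (hβd : 2 * β₁ ≤ (d : ℝ) + α)
    {x y : EuclideanSpace ℝ (Fin d)}
    {A a r u s Jxy : ℝ} (hA : 0 < A) (ha : 0 < a) (hr : 0 < r) (hu : 0 < u) (hus : u ≤ s)
    (hdist : r ≤ dist x y) (hδx : 0 < deltaD D x) (hδy : 0 < deltaD D y)
    (hJnn : 0 ≤ Jxy)
    (hJub : Jxy ≤ C₁ * (dist x y ^ (-((d : ℝ) + α)) *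
        Φ ((truncMin A₀ (dist x y)) ^ 2 /
          (truncMin A₀ (deltaD D x) * truncMin A₀ (deltaD D y))))) :
    Φ (a / min (max (deltaD D y) u) A) * Jxy ≤
      (C₁ * C_Φ ^ 3 * Φ 1) * ((1 + (a / min s A) ^ β₁) *
        (r ^ (-((d : ℝ) + α)) *
          Φ ((truncMin A₀ r) ^ 2 / (truncMin A₀ (deltaD D x) * truncMin A₀ u)))) *
      (1 + (s / deltaD D y) ^ β₁) := by
  have hs : 0 < s := lt_of_lt_of_le hu hus
  set δx := deltaD D x
  set δy := deltaD D y
  set t := dist x y with htdef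
  have ht : 0 < t := lt_of_lt_of_le hr hdist
  set c : ℝ := (d : ℝ) + α with hcdef
  have hc0 : 0 < c := by positivity
  -- truncated quantities
  set Tr := truncMin A₀ r with hTr
  set Tt := truncMin A₀ t with hTt
  set Tx := truncMin A₀ δx with hTx
  set Ty := truncMin A₀ δy with hTy
  set Tu := truncMin A₀ u with hTu
  have hTr0 : 0 < Tr := truncMin_pos hA₀ hr
  have hTt0 : 0 < Tt := truncMin_pos hA₀ ht
  have hTx0 : 0 < Tx := truncMin_pos hA₀ hδx
  have hTy0 : 0 < Ty := truncMin_pos hA₀ hδy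
  have hTu0 : 0 < Tu := truncMin_pos hA₀ hu
  have hΦ1pos : (0:ℝ) < Φ 1 := lt_of_lt_of_le one_pos (hΦ1 1 one_pos.le)
  set S : ℝ := Tr ^ 2 / (Tx * Tu) with hS
  have hS0 : 0 < S := by positivity
  have hΦS1 : 1 ≤ Φ S := hΦ1 S hS0.le
  -- notation for factors
  set m : ℝ := min (max δy u) A with hm
  have hm0 : 0 < m := lt_min (lt_of_lt_of_le hu (le_max_right _ _)) hA
  set msA : ℝ := min s A with hmsA
  have hmsA0 : 0 < msA := lt_min hs hA
  set X : ℝ := (a / msA) ^ β₁ with hX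
  have hX0 : 0 ≤ X := Real.rpow_nonneg (by positivity) _
  set w : ℝ := max 1 (s / max δy u) with hwdef
  have hw1 : 1 ≤ w := le_max_left _ _
  set v : ℝ := max 1 (u / δy) with hvdef
  have hv1 : 1 ≤ v := le_max_left _ _
  -- A. first factor
  have hfactor1 : Φ (a / m) ≤ (C_Φ * Φ 1) * (1 + X * w ^ β₁) := by
    have hgrow := phi_growth hβ₁ hC_Φ hΦ1 hΦmono hΦscale (t := a / m) (by positivity)
    have hstep : a / m ≤ (a / msA) * w := by
      have hkey : msA ≤ w * m := by
        rcases le_total A (max δy u) with hcase | hcase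
        · rw [hm, min_eq_right hcase]
          calc msA ≤ A := min_le_right _ _
            _ = 1 * A := (one_mul _).symm
            _ ≤ w * A := mul_le_mul_of_nonneg_right hw1 hA.le
        · rw [hm, min_eq_left hcase]
          have hb0 : 0 < max δy u := lt_of_lt_of_le hu (le_max_right _ _)
          calc msA ≤ s := min_le_left _ _
            _ = (s / max δy u) * max δy u := (div_mul_cancel₀ _ hb0.ne').symm
            _ ≤ w * max δy u := mul_le_mul_of_nonneg_right (le_max_right _ _) hb0.le
      have h2 : a / m ≤ (a * w) / msA := by
        rw [div_le_div_iff₀ hm0 hmsA0]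
        calc a * msA ≤ a * (w * m) := mul_le_mul_of_nonneg_left hkey ha.le
          _ = a * w * m := (mul_assoc _ _ _).symm
      calc a / m ≤ a * w / msA := h2
        _ = (a / msA) * w := by ring
    have h3 : (a / m) ^ β₁ ≤ X * w ^ β₁ := by
      calc (a / m) ^ β₁ ≤ ((a / msA) * w) ^ β₁ :=
            Real.rpow_le_rpow (by positivity) hstep hβ₁
        _ = X * w ^ β₁ := by
            rw [hX, ← Real.mul_rpow (by positivity) (by positivity)]
    calc Φ (a / m) ≤ C_Φ * Φ 1 * (1 + (a / m) ^ β₁) := hgrow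
      _ ≤ C_Φ * Φ 1 * (1 + X * w ^ β₁) :=
          mul_le_mul_of_nonneg_left (by linarith) (by positivity)
  -- B2 : trading the distance for r
  have hB2 : t ^ (-c) * Φ (Tt ^ 2 / (Tx * Ty)) ≤
      C_Φ * (r ^ (-c) * Φ (Tr ^ 2 / (Tx * Ty))) := by
    have hs₀0 : (0:ℝ) < Tr ^ 2 / (Tx * Ty) := by positivity
    have hTrTt : Tr ≤ Tt := truncMin_mono _ hdist
    have hle : Tr ^ 2 / (Tx * Ty) ≤ Tt ^ 2 / (Tx * Ty) := by
      have h9 : (0:ℝ) < Tx * Ty := by positivity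
      rw [div_le_div_iff₀ h9 h9]
      exact mul_le_mul_of_nonneg_right (pow_le_pow_left₀ hTr0.le hTrTt 2) h9.le
    have hscale := hΦscale _ _ hs₀0 hle
    have hratio : (Tt ^ 2 / (Tx * Ty)) / (Tr ^ 2 / (Tx * Ty)) = (Tt / Tr) ^ 2 := by
      field_simp
    have hrw : ((Tt / Tr) ^ 2 : ℝ) ^ β₁ = (Tt / Tr) ^ (2 * β₁) := by
      rw [← Real.rpow_natCast (Tt / Tr) 2, ← Real.rpow_mul (by positivity)]
      norm_num
    have h1 : (Tt / Tr) ^ (2 * β₁) ≤ (t / r) ^ (2 * β₁) := by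
      apply Real.rpow_le_rpow (by positivity) ?_ (by positivity)
      rw [div_le_div_iff₀ hTr0 hr]
      exact truncMin_ratio hr hdist
    have h2 : (t / r) ^ (2 * β₁) ≤ (t / r) ^ c :=
      Real.rpow_le_rpow_of_exponent_le ((one_le_div hr).2 hdist) hβd
    have hΦs₀ : (0:ℝ) < Φ (Tr ^ 2 / (Tx * Ty)) :=
      lt_of_lt_of_le one_pos (hΦ1 _ hs₀0.le)
    have h3 : Φ (Tt ^ 2 / (Tx * Ty)) ≤ C_Φ * (t / r) ^ c * Φ (Tr ^ 2 / (Tx * Ty)) := by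
      calc Φ (Tt ^ 2 / (Tx * Ty))
          ≤ C_Φ * ((Tt ^ 2 / (Tx * Ty)) / (Tr ^ 2 / (Tx * Ty))) ^ β₁ *
              Φ (Tr ^ 2 / (Tx * Ty)) := hscale
        _ = C_Φ * (Tt / Tr) ^ (2 * β₁) * Φ (Tr ^ 2 / (Tx * Ty)) := by rw [hratio, hrw]
        _ ≤ C_Φ * (t / r) ^ c * Φ (Tr ^ 2 / (Tx * Ty)) :=
            mul_le_mul_of_nonneg_right
              (mul_le_mul_of_nonneg_left (h1.trans h2) (by linarith)) hΦs₀.le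
    have hkey : t ^ (-c) * (t / r) ^ c = r ^ (-c) := by
      rw [Real.div_rpow ht.le hr.le, Real.rpow_neg ht.le, Real.rpow_neg hr.le]
      have htc : (0:ℝ) < t ^ c := Real.rpow_pos_of_pos ht _
      field_simp
    calc t ^ (-c) * Φ (Tt ^ 2 / (Tx * Ty))
        ≤ t ^ (-c) * (C_Φ * (t / r) ^ c * Φ (Tr ^ 2 / (Tx * Ty))) :=
          mul_le_mul_of_nonneg_left h3 (Real.rpow_nonneg ht.le _)
      _ = C_Φ * ((t ^ (-c) * (t / r) ^ c) * Φ (Tr ^ 2 / (Tx * Ty))) := by ring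
      _ = C_Φ * (r ^ (-c) * Φ (Tr ^ 2 / (Tx * Ty))) := by rw [hkey]
  -- B3 : trading δy for u
  have hB3 : Φ (Tr ^ 2 / (Tx * Ty)) ≤ C_Φ * v ^ β₁ * Φ S := by
    rcases le_or_gt u δy with hcase | hcase
    · have hTuy : Tu ≤ Ty := truncMin_mono _ hcase
      have harg : Tr ^ 2 / (Tx * Ty) ≤ S := by
        rw [hS, div_le_div_iff₀ (by positivity) (by positivity)]
        exact mul_le_mul_of_nonneg_left (mul_le_mul_of_nonneg_left hTuy hTx0.le)
          (sq_nonneg Tr)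
      have hmono := hΦmono (mem_Ici.2 (by positivity : (0:ℝ) ≤ Tr ^ 2 / (Tx * Ty)))
        (mem_Ici.2 hS0.le) harg
      have hvβ : 1 ≤ v ^ β₁ := Real.one_le_rpow hv1 hβ₁
      have h1 : (1:ℝ) ≤ C_Φ * v ^ β₁ := by
        calc (1:ℝ) = 1 * 1 := (one_mul _).symm
          _ ≤ C_Φ * v ^ β₁ := mul_le_mul hC_Φ hvβ zero_le_one (by linarith)
      calc Φ (Tr ^ 2 / (Tx * Ty)) ≤ Φ S := hmono
        _ ≤ C_Φ * v ^ β₁ * Φ S := le_mul_of_one_le_left (by linarith) h1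
    · have harg : S ≤ Tr ^ 2 / (Tx * Ty) := by
        have hTyu : Ty ≤ Tu := truncMin_mono _ hcase.le
        rw [hS, div_le_div_iff₀ (by positivity) (by positivity)]
        exact mul_le_mul_of_nonneg_left (mul_le_mul_of_nonneg_left hTyu hTx0.le)
          (sq_nonneg Tr)
      have hscale := hΦscale S _ hS0 harg
      have hratio : (Tr ^ 2 / (Tx * Ty)) / S = Tu / Ty := by
        rw [hS]; field_simp
      have h1 : (Tu / Ty) ^ β₁ ≤ (u / δy) ^ β₁ := by
        apply Real.rpow_le_rpow (by positivity) ?_ hβ₁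
        rw [div_le_div_iff₀ hTy0 hδy]
        exact truncMin_ratio hδy hcase.le
      have hveq : v = u / δy := max_eq_right (le_of_lt ((one_lt_div hδy).2 hcase))
      calc Φ (Tr ^ 2 / (Tx * Ty)) ≤ C_Φ * ((Tr ^ 2 / (Tx * Ty)) / S) ^ β₁ * Φ S := hscale
        _ = C_Φ * (Tu / Ty) ^ β₁ * Φ S := by rw [hratio]
        _ ≤ C_Φ * v ^ β₁ * Φ S := by
            rw [hveq]
            exact mul_le_mul_of_nonneg_right
              (mul_le_mul_of_nonneg_left h1 (by linarith)) (by linarith)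
  -- B : bound on Jxy
  have hfactor2 : Jxy ≤ (C₁ * C_Φ ^ 2) * (r ^ (-c) * (v ^ β₁ * Φ S)) := by
    have hvβ0 : (0:ℝ) ≤ v ^ β₁ := Real.rpow_nonneg (by positivity) _
    calc Jxy ≤ C₁ * (t ^ (-c) * Φ (Tt ^ 2 / (Tx * Ty))) := hJub
      _ ≤ C₁ * (C_Φ * (r ^ (-c) * Φ (Tr ^ 2 / (Tx * Ty)))) :=
          mul_le_mul_of_nonneg_left hB2 hC₁0.le
      _ ≤ C₁ * (C_Φ * (r ^ (-c) * (C_Φ * v ^ β₁ * Φ S))) := by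
          refine mul_le_mul_of_nonneg_left ?_ hC₁0.le
          refine mul_le_mul_of_nonneg_left ?_ (by linarith)
          exact mul_le_mul_of_nonneg_left hB3 (Real.rpow_nonneg hr.le _)
      _ = (C₁ * C_Φ ^ 2) * (r ^ (-c) * (v ^ β₁ * Φ S)) := by ring
  -- final combination
  have hΦm0 : (0:ℝ) ≤ Φ (a / m) := le_trans zero_le_one (hΦ1 _ (by positivity))
  have hw0 : (0:ℝ) ≤ w := le_trans zero_le_one hw1
  have hwβ0 : (0:ℝ) ≤ w ^ β₁ := Real.rpow_nonneg hw0 _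
  have hvβ0 : (0:ℝ) ≤ v ^ β₁ := Real.rpow_nonneg (by positivity) _
  have hb10 : (0:ℝ) ≤ (C_Φ * Φ 1) * (1 + X * w ^ β₁) := by
    apply mul_nonneg (by positivity)
    have := mul_nonneg hX0 hwβ0
    linarith
  have hΦS0 : (0:ℝ) ≤ Φ S := by linarith
  have hKnn : (0:ℝ) ≤ (C₁ * C_Φ ^ 3 * Φ 1) * (r ^ (-c) * Φ S) := by
    apply mul_nonneg (by positivity)
    exact mul_nonneg (Real.rpow_nonneg hr.le _) hΦS0
  calc Φ (a / m) * Jxy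
      ≤ ((C_Φ * Φ 1) * (1 + X * w ^ β₁)) * ((C₁ * C_Φ ^ 2) * (r ^ (-c) * (v ^ β₁ * Φ S))) :=
        mul_le_mul hfactor1 hfactor2 hJnn hb10
    _ = (C₁ * C_Φ ^ 3 * Φ 1) * (r ^ (-c) * Φ S) * (v ^ β₁ * (1 + X * w ^ β₁)) := by ring
    _ ≤ (C₁ * C_Φ ^ 3 * Φ 1) * (r ^ (-c) * Φ S) * ((1 + X) * (1 + (s / δy) ^ β₁)) :=
        mul_le_mul_of_nonneg_left (factor_bound hβ₁ hu hus hδy hX0) hKnn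
    _ = (C₁ * C_Φ ^ 3 * Φ 1) * ((1 + X) *
          (r ^ (-c) * Φ S)) * (1 + (s / δy) ^ β₁) := by ring


theorem stmt9 {d : ℕ} (hd : 1 ≤ d) (D : Set (EuclideanSpace ℝ (Fin d)))
    (hDopen : IsOpen D) (hDne : D.Nonempty) (hfr : (frontier D).Nonempty)
    (Φ : ℝ → ℝ) (β₁ C_Φ : ℝ) (hβ₁ : 0 ≤ β₁) (hC_Φ : 1 ≤ C_Φ)
    (hΦ0 : Φ 0 = 1) (hΦ1 : ∀ r : ℝ, 0 ≤ r → 1 ≤ Φ r)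
    (hΦmono : MonotoneOn Φ (Set.Ici 0)) (hΦcont : ContinuousOn Φ (Set.Ici 0))
    (hΦscale : ∀ s r : ℝ, 0 < s → s ≤ r → Φ r ≤ C_Φ * (r / s) ^ β₁ * Φ s)
    (α : ℝ) (hα0 : 0 < α) (hα2 : α < 2) (A₀ : ℝ≥0∞) (hA₀ : 0 < A₀)
    (J : EuclideanSpace ℝ (Fin d) → EuclideanSpace ℝ (Fin d) → ℝ)
    (C₁ : ℝ) (hC₁ : 1 < C₁)
    (hJnn : ∀ x y, 0 ≤ J x y)
    (hJmeas : Measurable (Function.uncurry J))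
    (hJsym : ∀ x ∈ D, ∀ y ∈ D, J x y = J y x)
    (hJbound : ∀ x ∈ D, ∀ y ∈ D, x ≠ y →
      C₁⁻¹ * (dist x y ^ (-((d : ℝ) + α)) *
          Φ ((truncMin A₀ (dist x y)) ^ 2 /
            (truncMin A₀ (deltaD D x) * truncMin A₀ (deltaD D y)))) ≤ J x y ∧
      J x y ≤ C₁ * (dist x y ^ (-((d : ℝ) + α)) *
          Φ ((truncMin A₀ (dist x y)) ^ 2 /
            (truncMin A₀ (deltaD D x) * truncMin A₀ (deltaD D y)))))
    (hβd : 2 * β₁ ≤ (d : ℝ) + α) (q' : ℝ) (hβq' : β₁ < q') (hq'd : q' ≤ (d : ℝ))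
    (hAik : Aikawa D q') :
    ∃ C : ℝ, 0 < C ∧ ∀ A a : ℝ, 0 < A → 0 < a → ∀ x ∈ D, ∀ z ∈ D,
      ∀ r u s : ℝ, 0 < r → 0 < u → u ≤ s →
      (∫⁻ y in (D ∩ Metric.ball z s) \ Metric.ball x r,
          ENNReal.ofReal (Φ (a / min (max (deltaD D y) u) A) * J x y)) ≤
        ENNReal.ofReal (C * s ^ (d : ℝ) * r ^ (-((d : ℝ) + α)) *
          (1 + (a / min s A) ^ β₁) *
          Φ ((truncMin A₀ r) ^ 2 /
            (truncMin A₀ (deltaD D x) * truncMin A₀ u))) := by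
  obtain ⟨C₀, hC₀, haik⟩ := hAik
  have hq'0 : 0 < q' := lt_of_le_of_lt hβ₁ hβq'
  obtain ⟨M, hM0, hstar⟩ := star D hfr hq'0 hq'd ⟨C₀, hC₀, haik⟩
  obtain ⟨C₂, hC₂0, hlayers⟩ := layers D hβ₁ hβq' hM0 hstar
  have hΦ1pos : (0:ℝ) < Φ 1 := lt_of_lt_of_le one_pos (hΦ1 1 one_pos.le)
  have hC₁0 : (0:ℝ) < C₁ := lt_trans one_pos hC₁
  refine ⟨C₁ * C_Φ ^ 3 * Φ 1 * C₂, by positivity, ?_⟩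
  intro A a hA ha x hx z hz r u s hr hu hus
  have hs : 0 < s := lt_of_lt_of_le hu hus
  -- positivity of the distance to the boundary inside D
  have hδpos : ∀ w ∈ D, 0 < deltaD D w := by
    intro w hw
    have hnotfr : w ∉ frontier D := fun hmem => (hDopen.frontier_eq ▸ hmem).2 hw
    exact (isClosed_frontier.notMem_iff_infDist_pos hfr).1 hnotfr
  have hδx : 0 < deltaD D x := hδpos x hx
  have hTx0 : 0 < truncMin A₀ (deltaD D x) := truncMin_pos hA₀ hδx
  have hTu0 : 0 < truncMin A₀ u := truncMin_pos hA₀ hu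
  have hTr0 : 0 < truncMin A₀ r := truncMin_pos hA₀ hr
  have hS0 : (0:ℝ) <
      (truncMin A₀ r) ^ 2 / (truncMin A₀ (deltaD D x) * truncMin A₀ u) := by positivity
  have hΦS1 : (1:ℝ) ≤ Φ ((truncMin A₀ r) ^ 2 /
      (truncMin A₀ (deltaD D x) * truncMin A₀ u)) := hΦ1 _ hS0.le
  have hX0 : (0:ℝ) ≤ (a / min s A) ^ β₁ :=
    Real.rpow_nonneg (div_nonneg ha.le (lt_min hs hA).le) _
  -- the constant factor pulled out of the integral
  set κ : ℝ := (C₁ * C_Φ ^ 3 * Φ 1) * ((1 + (a / min s A) ^ β₁) *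
    (r ^ (-((d : ℝ) + α)) * Φ ((truncMin A₀ r) ^ 2 /
      (truncMin A₀ (deltaD D x) * truncMin A₀ u)))) with hκdef
  have hκ0 : 0 ≤ κ := by
    apply mul_nonneg (by positivity)
    apply mul_nonneg (by linarith)
    exact mul_nonneg (Real.rpow_nonneg hr.le _) (by linarith)
  -- pointwise domination on the region of integration
  have key : ∀ y ∈ (D ∩ Metric.ball z s) \ Metric.ball x r,
      ENNReal.ofReal (Φ (a / min (max (deltaD D y) u) A) * J x y) ≤
        ENNReal.ofReal κ *
          ENNReal.ofReal (1 + (s / Metric.infDist y (frontier D)) ^ β₁) := by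
    rintro y ⟨⟨hyD, hyball⟩, hynot⟩
    have hdistxy : r ≤ dist x y := by
      rw [mem_ball, not_lt] at hynot
      rwa [dist_comm]
    have hδy : 0 < deltaD D y := hδpos y hyD
    have hxy : x ≠ y := by
      intro h
      rw [h, dist_self] at hdistxy
      linarith
    have hpt := pointwise (D := D) hβ₁ hC_Φ hΦ1 hΦmono hΦscale hα0 hA₀ hC₁0 hβd
      hA ha hr hu hus hdistxy hδx hδy (hJnn x y) (hJbound x hx y hyD hxy).2
    calc ENNReal.ofReal (Φ (a / min (max (deltaD D y) u) A) * J x y)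
        ≤ ENNReal.ofReal (κ * (1 + (s / deltaD D y) ^ β₁)) :=
          ENNReal.ofReal_le_ofReal hpt
      _ = ENNReal.ofReal κ *
            ENNReal.ofReal (1 + (s / Metric.infDist y (frontier D)) ^ β₁) :=
          ENNReal.ofReal_mul hκ0
  -- measurability of the dominating function
  have hgmeas : Measurable (fun y : EuclideanSpace ℝ (Fin d) =>
      ENNReal.ofReal (1 + (s / Metric.infDist y (frontier D)) ^ β₁)) := by
    apply ENNReal.measurable_ofReal.comp
    apply Measurable.add measurable_const
    exact (Real.continuous_rpow_const hβ₁).measurable.comp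
      (measurable_const.div (continuous_infDist_pt _).measurable)
  have hsub : (D ∩ Metric.ball z s) \ Metric.ball x r ⊆
      Metric.ball z s ∩ {y | 0 < Metric.infDist y (frontier D)} := by
    rintro y ⟨⟨hyD, hyball⟩, -⟩
    exact ⟨hyball, hδpos y hyD⟩
  calc (∫⁻ y in (D ∩ Metric.ball z s) \ Metric.ball x r,
        ENNReal.ofReal (Φ (a / min (max (deltaD D y) u) A) * J x y))
      ≤ ∫⁻ y in (D ∩ Metric.ball z s) \ Metric.ball x r,
          ENNReal.ofReal κ *
            ENNReal.ofReal (1 + (s / Metric.infDist y (frontier D)) ^ β₁) :=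
        setLIntegral_mono (measurable_const.mul hgmeas) key
    _ = ENNReal.ofReal κ * ∫⁻ y in (D ∩ Metric.ball z s) \ Metric.ball x r,
          ENNReal.ofReal (1 + (s / Metric.infDist y (frontier D)) ^ β₁) :=
        lintegral_const_mul' _ _ ENNReal.ofReal_ne_top
    _ ≤ ENNReal.ofReal κ *
          ∫⁻ y in Metric.ball z s ∩ {y | 0 < Metric.infDist y (frontier D)},
            ENNReal.ofReal (1 + (s / Metric.infDist y (frontier D)) ^ β₁) :=
        mul_le_mul_right (lintegral_mono_set hsub) _
    _ ≤ ENNReal.ofReal κ * ENNReal.ofReal (C₂ * s ^ (d : ℝ)) :=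
        mul_le_mul_right (hlayers z s hs) _
    _ = ENNReal.ofReal (κ * (C₂ * s ^ (d : ℝ))) := (ENNReal.ofReal_mul hκ0).symm
    _ ≤ ENNReal.ofReal (C₁ * C_Φ ^ 3 * Φ 1 * C₂ * s ^ (d : ℝ) * r ^ (-((d : ℝ) + α)) *
          (1 + (a / min s A) ^ β₁) *
          Φ ((truncMin A₀ r) ^ 2 /
            (truncMin A₀ (deltaD D x) * truncMin A₀ u))) := by
        apply ENNReal.ofReal_le_ofReal
        apply le_of_eq
        rw [hκdef]; ring
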